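/- arXiv:2209.04356 — 2 statements merged into one kernel-verified Lean document; each statement's English description precedes it below -/
import Mathlib

section
/- Let C be a finite nonempty type and let p be a probability mass function on a finite product type C × X × Y; fix x ∈ X and y ∈ Y. Let (a, b) ∈ (C → ℝ) × (C → ℝ) be any pair of vectors satisfying: for every c ∈ C, 0 ≤ a_c ≤ b_c ≤ p(C = c) and 0 < b_c, and Σ_c a_c = p(X = x, Y = y) and Σ_c b_c = p(X = x). Then the objective value satisfies p(X = x, Y = y) ≤ Σ_c a_c · p(C = c) / b_c ≤ 1 − (p(X = x) − p(X = x, Y = y)). In particular, the optimization-based causal bounds are at least as tight as the Tian–Pearl bounds. -/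
/-! Termwise, `b_c ≤ p(C = c)` gives `a_c ≤ a_c · p(C = c) / b_c`, and `a_c ≤ b_c` gives
`a_c · p(C = c) / b_c ≤ a_c + (p(C = c) - b_c)`. Summing over `c` and using `Σ_c p(C = c) = 1`
turns these into the two Tian–Pearl bounds. -/

open Finset

/-- `p(X = x, Y = y)`: marginal over `C`. -/
noncomputable def pXY {C X Y : Type*} [Fintype C] (p : C × X × Y → ℝ) (x : X) (y : Y) : ℝ :=
  ∑ c : C, p (c, x, y)

/-- `p(X = x)`: marginal over `C` and `Y`. -/
noncomputable def pX {C X Y : Type*} [Fintype C] [Fintype Y] (p : C × X × Y → ℝ) (x : X) : ℝ :=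
  ∑ c : C, ∑ y' : Y, p (c, x, y')

/-- `p(C = c)`: marginal over `X` and `Y`. -/
noncomputable def pC {C X Y : Type*} [Fintype X] [Fintype Y] (p : C × X × Y → ℝ) (c : C) : ℝ :=
  ∑ x' : X, ∑ y' : Y, p (c, x', y')

theorem sum_pC {C X Y : Type*} [Fintype C] [Fintype X] [Fintype Y] (p : C × X × Y → ℝ) :
    ∑ c : C, pC p c = ∑ z : C × X × Y, p z := by
  simp only [pC, Fintype.sum_prod_type]

section OrderedField

variable {K : Type*} [Field K] [LinearOrder K] [IsStrictOrderedRing K] {a b q : K}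

theorem le_mul_div_of_le (ha : 0 ≤ a) (hbq : b ≤ q) (hb : 0 < b) : a ≤ a * q / b := by
  rw [mul_div_assoc]
  exact le_mul_of_one_le_right ha ((one_le_div hb).mpr hbq)

theorem mul_div_le_add_sub (hab : a ≤ b) (hbq : b ≤ q) (hb : 0 < b) :
    a * q / b ≤ a + (q - b) := by
  have hsplit : a * q / b = a + (q - b) * (a / b) := by field_simp; ring
  have hratio : a / b ≤ 1 := (div_le_one hb).mpr hab
  rw [hsplit]
  have := mul_le_of_le_one_right (sub_nonneg.mpr hbq) hratio
  linarith

end OrderedField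

theorem objective_within_tian_pearl_bounds_general
    {C X Y : Type*} [Fintype C] [Fintype X] [Fintype Y]
    (p : C × X × Y → ℝ) (hsum : ∑ z : C × X × Y, p z = 1)
    (x : X) (y : Y)
    (a b : C → ℝ)
    (hfeas : ∀ c : C, 0 ≤ a c ∧ a c ≤ b c ∧ b c ≤ pC p c ∧ 0 < b c)
    (ha : (∑ c : C, a c) = pXY p x y)
    (hb : (∑ c : C, b c) = pX p x) :
    pXY p x y ≤ (∑ c : C, a c * pC p c / b c) ∧
    (∑ c : C, a c * pC p c / b c) ≤ 1 - (pX p x - pXY p x y) := by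
  constructor
  · rw [← ha]
    refine sum_le_sum fun c _ => ?_
    obtain ⟨ha0, -, hbp, hb0⟩ := hfeas c
    exact le_mul_div_of_le ha0 hbp hb0
  · calc (∑ c : C, a c * pC p c / b c) ≤ ∑ c : C, (a c + (pC p c - b c)) :=
          sum_le_sum fun c _ =>
            let ⟨_, hab, hbp, hb0⟩ := hfeas c
            mul_div_le_add_sub hab hbp hb0
      _ = (∑ c : C, a c) + ((∑ c : C, pC p c) - ∑ c : C, b c) := by
          rw [sum_add_distrib, sum_sub_distrib]
      _ = 1 - (pX p x - pXY p x y) := by rw [ha, hb, sum_pC, hsum]; ring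

theorem objective_within_tian_pearl_bounds
    {C X Y : Type*} [Fintype C] [Fintype X] [Fintype Y] [Nonempty C]
    (p : C × X × Y → ℝ) (hp : ∀ z, 0 ≤ p z) (hsum : ∑ z : C × X × Y, p z = 1)
    (x : X) (y : Y)
    (a b : C → ℝ)
    (hfeas : ∀ c : C, 0 ≤ a c ∧ a c ≤ b c ∧ b c ≤ pC p c ∧ 0 < b c)
    (ha : (∑ c : C, a c) = pXY p x y)
    (hb : (∑ c : C, b c) = pX p x) :
    pXY p x y ≤ (∑ c : C, a c * pC p c / b c) ∧
    (∑ c : C, a c * pC p c / b c) ≤ 1 - (pX p x - pXY p x y) :=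
  objective_within_tian_pearl_bounds_general p hsum x y a b hfeas ha hb
end

section
/- Let Y be a random variable taking finitely many real values and let α ∈ (0, 1). Let q_α = inf{ y ∈ ℝ : P(Y ≤ y) ≥ α } be the lower α-quantile of Y. Then the supremum defining CVaR is attained at q_α: CVaR_α(Y) = q_α − (1/α) · E[(q_α − Y)^+]. -/
/-!
Comparing `(ν - Y)⁺` with `(q - Y)⁺` pointwise shows that every number between `P(Y < q)` and
`P(Y ≤ q)` is a subgradient of `ν ↦ E[(ν - Y)⁺]` at `q`. Hence `q` maximises
`ν - E[(ν - Y)⁺] / α` as soon as `P(Y < q) ≤ α ≤ P(Y ≤ q)`. The lower quantile `q_α`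
satisfies both inequalities: the first because the distribution function of `Y` stays
below `α` to the left of `q_α`, the second because it is right-continuous.
-/

open MeasureTheory ProbabilityTheory Filter Set Function

namespace StieltjesFunction

variable (f : StieltjesFunction ℝ) {α : ℝ}

theorem le_apply_sInf_setOf_le_apply (hne : {y | α ≤ f y}.Nonempty) :
    α ≤ f (sInf {y | α ≤ f y}) := by
  have hright : ∀ y ∈ Ioi (sInf {y | α ≤ f y}), α ≤ f y := fun y hy ↦ by
    obtain ⟨s, hs, hsy⟩ := exists_lt_of_csInf_lt hne hy
    exact hs.trans (f.mono hsy.le)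
  exact ge_of_tendsto ((f.right_continuous _).mono Ioi_subset_Ici_self)
    (eventually_nhdsWithin_of_forall hright)

theorem leftLim_sInf_setOf_le_apply_le (hbdd : BddBelow {y | α ≤ f y}) :
    leftLim f (sInf {y | α ≤ f y}) ≤ α := by
  have hleft : ∀ y ∈ Iio (sInf {y | α ≤ f y}), f y ≤ α := fun y hy ↦
    le_of_not_ge (notMem_of_lt_csInf (s := {y | α ≤ f y}) hy hbdd)
  exact le_of_tendsto (f.mono.tendsto_leftLim _) (eventually_nhdsWithin_of_forall hleft)

end StieltjesFunction

namespace ProbabilityTheory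

variable {μ : Measure ℝ} {α : ℝ}

theorem measureReal_Iio_eq_leftLim_cdf [IsProbabilityMeasure μ] (x : ℝ) :
    μ.real (Iio x) = leftLim (cdf μ) x := by
  have h := (cdf μ).measure_Iio (tendsto_cdf_atBot μ) x
  rw [measure_cdf, sub_zero] at h
  rw [measureReal_def, h, ENNReal.toReal_ofReal]
  exact (cdf_nonneg μ (x - 1)).trans ((monotone_cdf μ).le_leftLim (sub_one_lt x))

theorem nonempty_setOf_le_cdf (hα : α < 1) : {y | α ≤ cdf μ y}.Nonempty :=
  ((tendsto_cdf_atTop μ).eventually (eventually_ge_nhds hα)).exists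

theorem bddBelow_setOf_le_cdf (hα : 0 < α) : BddBelow {y | α ≤ cdf μ y} := by
  obtain ⟨b, hb⟩ :=
    eventually_atBot.mp ((tendsto_cdf_atBot μ).eventually (eventually_lt_nhds hα))
  refine ⟨b, fun y hy ↦ ?_⟩
  by_contra! hyb
  exact (hb y hyb.le).not_ge hy

end ProbabilityTheory

section RandomVariable

variable {Ω : Type*} [MeasurableSpace Ω] {P : Measure Ω} {Y : Ω → ℝ} {α : ℝ}

theorem Measurable.integrable_of_finite_range [IsFiniteMeasure P] (hY : Measurable Y)
    (hfin : (range Y).Finite) : Integrable Y P := by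
  obtain ⟨C, hC⟩ := (hfin.image (‖·‖)).bddAbove
  exact .of_bound hY.aestronglyMeasurable C
    (ae_of_all _ fun ω ↦ hC ⟨Y ω, mem_range_self ω, rfl⟩)

theorem MeasureTheory.Integrable.posPart_const_sub [IsFiniteMeasure P] (hY : Integrable Y P)
    (c : ℝ) : Integrable (fun ω ↦ max (c - Y ω) 0) P :=
  ((integrable_const c).sub hY).pos_part

theorem cdf_map_eq_measureReal_setOf_le [IsProbabilityMeasure P] (hY : Measurable Y) (y : ℝ) :
    cdf (P.map Y) y = P.real {ω | Y ω ≤ y} := by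
  have := Measure.isProbabilityMeasure_map (μ := P) hY.aemeasurable
  rw [cdf_eq_real, map_measureReal_apply hY measurableSet_Iic]
  rfl

theorem measureReal_setOf_lt_eq_leftLim_cdf_map [IsProbabilityMeasure P] (hY : Measurable Y)
    (q : ℝ) : P.real {ω | Y ω < q} = leftLim (cdf (P.map Y)) q := by
  have := Measure.isProbabilityMeasure_map (μ := P) hY.aemeasurable
  rw [← measureReal_Iio_eq_leftLim_cdf, map_measureReal_apply hY measurableSet_Iio]
  rfl

noncomputable def lowerQuantile (P : Measure Ω) (Y : Ω → ℝ) (α : ℝ) : ℝ :=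
  sInf {y | α ≤ P.real {ω | Y ω ≤ y}}

theorem lowerQuantile_eq_sInf_setOf_le_cdf_map [IsProbabilityMeasure P] (hY : Measurable Y) :
    lowerQuantile P Y α = sInf {y | α ≤ cdf (P.map Y) y} := by
  simp only [lowerQuantile, cdf_map_eq_measureReal_setOf_le hY]

theorem le_measureReal_setOf_le_lowerQuantile [IsProbabilityMeasure P] (hY : Measurable Y)
    (hα : α < 1) : α ≤ P.real {ω | Y ω ≤ lowerQuantile P Y α} := by
  rw [← cdf_map_eq_measureReal_setOf_le hY, lowerQuantile_eq_sInf_setOf_le_cdf_map hY]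
  exact (cdf _).le_apply_sInf_setOf_le_apply (nonempty_setOf_le_cdf hα)

theorem measureReal_setOf_lt_lowerQuantile_le [IsProbabilityMeasure P] (hY : Measurable Y)
    (hα : 0 < α) : P.real {ω | Y ω < lowerQuantile P Y α} ≤ α := by
  rw [measureReal_setOf_lt_eq_leftLim_cdf_map hY, lowerQuantile_eq_sInf_setOf_le_cdf_map hY]
  exact (cdf _).leftLim_sInf_setOf_le_apply_le (bddBelow_setOf_le_cdf hα)

theorem integral_posPart_sub_add_mul_measureReal_le [IsFiniteMeasure P] (hY : Integrable Y P)
    {s : Set Ω} (hs : MeasurableSet s) {q : ℝ} (hlt : ∀ ω, Y ω < q → ω ∈ s)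
    (hle : ∀ ω ∈ s, Y ω ≤ q) (ν : ℝ) :
    ∫ ω, max (q - Y ω) 0 ∂P + (ν - q) * P.real s ≤ ∫ ω, max (ν - Y ω) 0 ∂P := by
  have hind : Integrable (s.indicator fun _ ↦ ν - q) P := (integrable_const _).indicator hs
  calc ∫ ω, max (q - Y ω) 0 ∂P + (ν - q) * P.real s
      = ∫ ω, (max (q - Y ω) 0 + s.indicator (fun _ ↦ ν - q) ω) ∂P := by
        rw [integral_add (hY.posPart_const_sub q) hind, integral_indicator_const _ hs,
          smul_eq_mul, mul_comm]
    _ ≤ ∫ ω, max (ν - Y ω) 0 ∂P := by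
        refine integral_mono ((hY.posPart_const_sub q).add hind) (hY.posPart_const_sub ν)
          fun ω ↦ ?_
        by_cases hω : ω ∈ s
        · rw [indicator_of_mem hω, max_eq_left (sub_nonneg.2 (hle ω hω))]
          exact le_max_of_le_left (by linarith)
        · have hqY : q ≤ Y ω := not_lt.1 (hω ∘ hlt ω)
          rw [indicator_of_notMem hω, add_zero, max_eq_right (sub_nonpos.2 hqY)]
          exact le_max_right _ _

noncomputable def cvarObjective (P : Measure Ω) (Y : Ω → ℝ) (α ν : ℝ) : ℝ :=
  ν - (1 / α) * ∫ ω, max (ν - Y ω) 0 ∂P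

theorem cvarObjective_le_of_measureReal_lt_le_le [IsFiniteMeasure P] (hY : Measurable Y)
    (hYi : Integrable Y P) (hα : 0 < α) {q : ℝ} (hlt : P.real {ω | Y ω < q} ≤ α)
    (hle : α ≤ P.real {ω | Y ω ≤ q}) (ν : ℝ) :
    cvarObjective P Y α ν ≤ cvarObjective P Y α q := by
  have key : α * (ν - q) ≤ ∫ ω, max (ν - Y ω) 0 ∂P - ∫ ω, max (q - Y ω) 0 ∂P := by
    rcases le_total q ν with hqν | hνq
    · have := integral_posPart_sub_add_mul_measureReal_le (s := {ω | Y ω ≤ q}) hYi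
        (hY measurableSet_Iic) (fun _ h ↦ h.le) (fun _ h ↦ h) ν
      nlinarith [mul_le_mul_of_nonneg_right hle (sub_nonneg.2 hqν)]
    · have := integral_posPart_sub_add_mul_measureReal_le (s := {ω | Y ω < q}) hYi
        (hY measurableSet_Iio) (fun _ h ↦ h) (fun _ h ↦ h.le) ν
      nlinarith [mul_le_mul_of_nonpos_right hlt (sub_nonpos.2 hνq)]
  have h := (le_div_iff₀' hα).2 key
  rw [sub_div] at h
  simp only [cvarObjective, one_div_mul_eq_div]
  linarith

theorem iSup_cvarObjective_eq_of_measureReal_lt_le_le [IsFiniteMeasure P] (hY : Measurable Y)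
    (hYi : Integrable Y P) (hα : 0 < α) {q : ℝ} (hlt : P.real {ω | Y ω < q} ≤ α)
    (hle : α ≤ P.real {ω | Y ω ≤ q}) :
    ⨆ ν, cvarObjective P Y α ν = cvarObjective P Y α q :=
  have h := cvarObjective_le_of_measureReal_lt_le_le hY hYi hα hlt hle
  le_antisymm (ciSup_le h) (le_ciSup ⟨_, forall_mem_range.2 h⟩ q)

end RandomVariable

theorem cvar_sup_attained_at_lower_quantile
    {Ω : Type*} [MeasurableSpace Ω] (P : Measure Ω) [IsProbabilityMeasure P]
    (Y : Ω → ℝ) (hY : Measurable Y) (hfin : (Set.range Y).Finite)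
    (α : ℝ) (hα0 : 0 < α) (hα1 : α < 1)
    (qα : ℝ) (hqα : qα = sInf {y : ℝ | α ≤ (P {ω | Y ω ≤ y}).toReal}) :
    (⨆ ν : ℝ, (ν - (1 / α) * ∫ ω, max (ν - Y ω) 0 ∂P)) =
      qα - (1 / α) * ∫ ω, max (qα - Y ω) 0 ∂P := by
  subst hqα
  exact iSup_cvarObjective_eq_of_measureReal_lt_le_le hY (hY.integrable_of_finite_range hfin) hα0
    (measureReal_setOf_lt_lowerQuantile_le hY hα0) (le_measureReal_setOf_le_lowerQuantile hY hα1)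
end
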